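/- arXiv:math/0602065 — 4 statements merged into one kernel-verified Lean document; each statement's English description precedes it below -/
import Mathlib

section
/- Let ν be a σ-finite measure on the set 𝒮 of nonincreasing sequences u = (u_0, u_1, …) with values in [0,1], such that ∑_j u_j = 1 for ν-almost every u and ∫_𝒮 (1 − u_0) ν(du) < ∞. Define the measure L on (0,∞) by L(A) = ∫_𝒮 ∑_{j : 0<u_j<1} u_j · 1_A(−log u_j) ν(du). Then ∫_{(0,∞)} min(1, x) L(dx) ≤ 2 ∫_𝒮 (1 − u_0) ν(du) < ∞; in particular L is the Lévy measure of a subordinator. -/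
open MeasureTheory ENNReal
open scoped Classical

/-- The space 𝒮 of nonincreasing sequences with values in `[0,1]`. -/
abbrev FragSeq : Type := {u : ℕ → ℝ // (∀ j, u j ∈ Set.Icc (0:ℝ) 1) ∧ Antitone u}

/-!
Writing `L` as the countable sum over `j` of the images under `u ↦ -log u_j` of `ν` weighted by
`u_j`, one gets `∫ min(1, x) L(dx) = ∫ ∑_j u_j min(1, -log u_j) ν(du)`. For `j = 0` the summand is
at most `-u_0 log u_0 ≤ 1 - u_0`, and for `j ≥ 1` it is at most `u_j`, whose sum is `1 - u_0`.
-/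

namespace MeasureTheory.Measure

variable {α β ι : Type*} [MeasurableSpace α] [MeasurableSpace β] [Countable ι]
  {ν : Measure α} {L : Measure β} {w : ι → α → ℝ≥0∞} {g : ι → α → β}

theorem eq_sum_map_withDensity (hw : ∀ j, Measurable (w j)) (hg : ∀ j, Measurable (g j))
    (hL : ∀ A, MeasurableSet A → L A = ∫⁻ u, ∑' j, w j u * A.indicator 1 (g j u) ∂ν) :
    L = Measure.sum fun j => (ν.withDensity (w j)).map (g j) := by
  ext A hA
  rw [hL A hA, sum_apply _ hA, lintegral_tsum (f := fun j u => w j u * A.indicator 1 (g j u))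
    fun j => ((hw j).mul ((measurable_one.indicator hA).comp (hg j))).aemeasurable]
  refine tsum_congr fun j => ?_
  rw [map_apply (hg j) hA, withDensity_apply _ (hg j hA), ← lintegral_indicator (hg j hA)]
  refine lintegral_congr fun u => ?_
  by_cases hu : g j u ∈ A <;> simp [hu, Set.indicator]

theorem lintegral_eq_lintegral_tsum_of_eq (hw : ∀ j, Measurable (w j))
    (hg : ∀ j, Measurable (g j))
    (hL : ∀ A, MeasurableSet A → L A = ∫⁻ u, ∑' j, w j u * A.indicator 1 (g j u) ∂ν)
    {f : β → ℝ≥0∞} (hf : Measurable f) :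
    ∫⁻ x, f x ∂L = ∫⁻ u, ∑' j, w j u * f (g j u) ∂ν := by
  rw [eq_sum_map_withDensity hw hg hL, lintegral_sum_measure,
    lintegral_tsum (f := fun j u => w j u * f (g j u))
      fun j => ((hw j).mul (hf.comp (hg j))).aemeasurable]
  refine tsum_congr fun j => ?_
  rw [lintegral_map hf (hg j)]
  exact lintegral_withDensity_eq_lintegral_mul _ (hw j) (hf.comp (hg j))

end MeasureTheory.Measure

theorem ENNReal.tsum_le_two_mul_of_tsum_eq_one {v : ℕ → ℝ} (hv : ∀ j, 0 ≤ v j)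
    (hsum : ∑' j, v j = 1)
    {a : ℕ → ℝ≥0∞} (h0 : a 0 ≤ ENNReal.ofReal (1 - v 0))
    (hsucc : ∀ j, a (j + 1) ≤ ENNReal.ofReal (v (j + 1))) :
    ∑' j, a j ≤ 2 * ENNReal.ofReal (1 - v 0) := by
  have hv_summable : Summable v := by
    by_contra h
    simp [tsum_eq_zero_of_not_summable h] at hsum
  have htail : HasSum (fun j => v (j + 1)) (1 - v 0) := by
    simpa [hsum] using (hasSum_nat_add_iff' 1).2 hv_summable.hasSum
  have hsucc_sum : ∑' j, a (j + 1) ≤ ENNReal.ofReal (1 - v 0) :=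
    calc ∑' j, a (j + 1) ≤ ∑' j, ENNReal.ofReal (v (j + 1)) := ENNReal.tsum_le_tsum hsucc
      _ = ENNReal.ofReal (1 - v 0) := by
        rw [← ENNReal.ofReal_tsum_of_nonneg (fun j => hv (j + 1)) htail.summable, htail.tsum_eq]
  calc ∑' j, a j = a 0 + ∑' j, a (j + 1) := tsum_eq_zero_add' ENNReal.summable
    _ ≤ ENNReal.ofReal (1 - v 0) + ENNReal.ofReal (1 - v 0) := add_le_add h0 hsucc_sum
    _ = 2 * ENNReal.ofReal (1 - v 0) := (two_mul _).symm

noncomputable def fragWeight (j : ℕ) (u : FragSeq) : ℝ≥0∞ :=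
  if 0 < u.1 j ∧ u.1 j < 1 then ENNReal.ofReal (u.1 j) else 0

theorem measurable_fragSeq_apply (j : ℕ) : Measurable fun u : FragSeq => u.1 j :=
  (measurable_pi_apply j).comp measurable_subtype_coe

theorem measurable_fragWeight (j : ℕ) : Measurable (fragWeight j) := by
  have h := measurable_fragSeq_apply j
  exact Measurable.ite ((measurableSet_lt measurable_const h).inter
    (measurableSet_lt h measurable_const)) (ENNReal.measurable_ofReal.comp h) measurable_const

theorem ite_eq_fragWeight_mul_indicator (j : ℕ) (u : FragSeq) (A : Set ℝ) :
    (if 0 < u.1 j ∧ u.1 j < 1 ∧ -Real.log (u.1 j) ∈ A then ENNReal.ofReal (u.1 j) else 0)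
      = fragWeight j u * A.indicator 1 (-Real.log (u.1 j)) := by
  by_cases hA : -Real.log (u.1 j) ∈ A <;> simp [fragWeight, hA]

theorem fragWeight_mul_le_self (j : ℕ) (u : FragSeq) :
    fragWeight j u * ENNReal.ofReal (min 1 (-Real.log (u.1 j))) ≤ ENNReal.ofReal (u.1 j) := by
  refine (mul_le_of_le_one_right' (ENNReal.ofReal_le_one.2 (min_le_left _ _))).trans ?_
  unfold fragWeight
  split_ifs <;> simp

theorem fragWeight_mul_le_one_sub (j : ℕ) (u : FragSeq) :
    fragWeight j u * ENNReal.ofReal (min 1 (-Real.log (u.1 j)))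
      ≤ ENNReal.ofReal (1 - u.1 j) := by
  unfold fragWeight
  split_ifs with h
  · rw [← ENNReal.ofReal_mul h.1.le]
    refine ENNReal.ofReal_le_ofReal ?_
    calc u.1 j * min 1 (-Real.log (u.1 j)) ≤ u.1 j * -Real.log (u.1 j) :=
          mul_le_mul_of_nonneg_left (min_le_right _ _) h.1.le
      _ = Real.negMulLog (u.1 j) := by rw [Real.negMulLog]; ring
      _ ≤ 1 - u.1 j := Real.negMulLog_le_one_sub_self h.1.le
  · simp

theorem stmt0_general (ν : Measure FragSeq)
    (hsum : ∀ᵐ u ∂ν, ∑' j, u.1 j = 1)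
    (hint : ∫⁻ u, ENNReal.ofReal (1 - u.1 0) ∂ν < ⊤)
    (L : Measure ℝ)
    (hL : ∀ A : Set ℝ, MeasurableSet A →
      L A = ∫⁻ u, ∑' j, (if 0 < u.1 j ∧ u.1 j < 1 ∧ -Real.log (u.1 j) ∈ A
        then ENNReal.ofReal (u.1 j) else 0) ∂ν) :
    ∫⁻ x in Set.Ioi (0:ℝ), ENNReal.ofReal (min 1 x) ∂L
        ≤ 2 * ∫⁻ u, ENNReal.ofReal (1 - u.1 0) ∂ν ∧
      2 * ∫⁻ u, ENNReal.ofReal (1 - u.1 0) ∂ν < ⊤ := by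
  refine ⟨?_, ENNReal.mul_lt_top (by norm_num) hint⟩
  have hL' : ∀ A, MeasurableSet A → L A
      = ∫⁻ u, ∑' j, fragWeight j u * A.indicator 1 (-Real.log (u.1 j)) ∂ν := fun A hA => by
    simp only [hL A hA, ite_eq_fragWeight_mul_indicator]
  have hf : Measurable ((Set.Ioi (0:ℝ)).indicator fun x => ENNReal.ofReal (min 1 x)) :=
    (ENNReal.measurable_ofReal.comp (measurable_const.min measurable_id)).indicator
      measurableSet_Ioi
  rw [← lintegral_indicator measurableSet_Ioi, Measure.lintegral_eq_lintegral_tsum_of_eq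
    measurable_fragWeight (fun j => (Real.measurable_log.comp (measurable_fragSeq_apply j)).neg)
    hL' hf]
  calc _ ≤ ∫⁻ u, 2 * ENNReal.ofReal (1 - u.1 0) ∂ν := by
        refine lintegral_mono_ae (hsum.mono fun u hu => ?_)
        refine (ENNReal.tsum_le_tsum fun j =>
          mul_le_mul_right (Set.indicator_le_self _ _ _) _).trans ?_
        exact ENNReal.tsum_le_two_mul_of_tsum_eq_one (fun j => (u.2.1 j).1) hu
          (fragWeight_mul_le_one_sub 0 u) (fun j => fragWeight_mul_le_self (j + 1) u)
    _ = 2 * ∫⁻ u, ENNReal.ofReal (1 - u.1 0) ∂ν :=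
        lintegral_const_mul 2 (ENNReal.measurable_ofReal.comp
          (measurable_const.sub (measurable_fragSeq_apply 0)))

theorem stmt0 (ν : Measure FragSeq) [SigmaFinite ν]
    (hsum : ∀ᵐ u ∂ν, ∑' j, u.1 j = 1)
    (hint : ∫⁻ u, ENNReal.ofReal (1 - u.1 0) ∂ν < ⊤)
    (L : Measure ℝ)
    (hL : ∀ A : Set ℝ, MeasurableSet A →
      L A = ∫⁻ u, ∑' j, (if 0 < u.1 j ∧ u.1 j < 1 ∧ -Real.log (u.1 j) ∈ A
        then ENNReal.ofReal (u.1 j) else 0) ∂ν) :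
    ∫⁻ x in Set.Ioi (0:ℝ), ENNReal.ofReal (min 1 x) ∂L
        ≤ 2 * ∫⁻ u, ENNReal.ofReal (1 - u.1 0) ∂ν ∧
      2 * ∫⁻ u, ENNReal.ofReal (1 - u.1 0) ∂ν < ⊤ :=
  stmt0_general ν hsum hint L hL
end

section
/- Let ν be a σ-finite measure on the set 𝒮 of nonincreasing sequences u = (u_0, u_1, …) with values in [0,1], such that ∑_j u_j = 1 for ν-almost every u and ∫_𝒮 (1 − u_0) ν(du) < ∞. Define the measure L on (0,∞) by L(A) = ∫_𝒮 ∑_{j : 0<u_j<1} u_j · 1_A(−log u_j) ν(du). Then for every q ≥ 0, ∫_{(0,∞)} (1 − e^{−q x}) L(dx) = ∫_𝒮 (1 − ∑_j u_j^{q+1}) ν(du), i.e. the function κ(q) = ∫_𝒮 (1 − ∑_j u_j^{q+1}) ν(du) admits the Lévy–Khintchine representation with Lévy measure L. -/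
open MeasureTheory ENNReal
open scoped Classical

/-!
A fragment of size `x ∈ (0,1)` puts mass `x` of `L` at `-log x`, where
`1 - e^{-q·(-log x)} = 1 - x^q`. Hence `∫ (1 - e^{-qx}) L(dx) = ∫ ∑_j u_j (1 - u_j^q) ν(du)`,
and mass conservation `∑_j u_j = 1` turns the inner sum into `1 - ∑_j u_j^{q+1}`; the fragments
of size `0` or `1` contribute nothing to either side.
-/

open Set

namespace MeasureTheory

variable {α β : Type*} [MeasurableSpace α] [MeasurableSpace β]
  {ν : Measure α} {L : Measure β} {w : ℕ → α → ℝ≥0∞} {f : ℕ → α → β}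

theorem Measure.eq_sum_map_withDensity_of_apply_eq (hw : ∀ j, Measurable (w j))
    (hf : ∀ j, Measurable (f j))
    (hL : ∀ A, MeasurableSet A → L A = ∫⁻ u, ∑' j, (f j ⁻¹' A).indicator (w j) u ∂ν) :
    L = Measure.sum fun j => (ν.withDensity (w j)).map (f j) := by
  ext A hA
  rw [hL A hA, Measure.sum_apply _ hA,
    lintegral_tsum fun j => ((hw j).indicator (hf j hA)).aemeasurable]
  refine tsum_congr fun j => ?_
  rw [Measure.map_apply (hf j) hA, withDensity_apply _ (hf j hA), lintegral_indicator (hf j hA)]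

theorem lintegral_eq_lintegral_tsum_of_apply_eq (hw : ∀ j, Measurable (w j))
    (hf : ∀ j, Measurable (f j))
    (hL : ∀ A, MeasurableSet A → L A = ∫⁻ u, ∑' j, (f j ⁻¹' A).indicator (w j) u ∂ν)
    {g : β → ℝ≥0∞} (hg : Measurable g) :
    ∫⁻ x, g x ∂L = ∫⁻ u, ∑' j, w j u * g (f j u) ∂ν := by
  have hmeas : ∀ j, AEMeasurable (fun u => w j u * g (f j u)) ν :=
    fun j => ((hw j).mul (hg.comp (hf j))).aemeasurable
  rw [Measure.eq_sum_map_withDensity_of_apply_eq hw hf hL, lintegral_sum_measure,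
    lintegral_tsum hmeas]
  refine tsum_congr fun j => ?_
  rw [lintegral_map hg (hf j)]
  exact lintegral_withDensity_eq_lintegral_mul ν (hw j) (hg.comp (hf j))

end MeasureTheory

theorem ofReal_sub_rpow_add_one_eq_indicator_mul {x q : ℝ} (hx : x ∈ Icc 0 1) (hq : 0 ≤ q) :
    ENNReal.ofReal (x - x ^ (q + 1)) = (Ioo 0 1).indicator ENNReal.ofReal x *
      (Ioi 0).indicator (fun y => ENNReal.ofReal (1 - Real.exp (-q * y))) (-Real.log x) := by
  by_cases hx' : x ∈ Ioo 0 1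
  · have hlog : 0 < -Real.log x := neg_pos.2 (Real.log_neg hx'.1 hx'.2)
    rw [indicator_of_mem hx', indicator_of_mem (show -Real.log x ∈ Ioi 0 from hlog),
      ← ENNReal.ofReal_mul hx'.1.le, Real.rpow_add_one hx'.1.ne', Real.rpow_def_of_pos hx'.1]
    ring_nf
  · obtain rfl | rfl : x = 0 ∨ x = 1 := by
      simp only [mem_Ioo, not_and_or, not_lt] at hx'
      rcases hx' with h | h
      · exact Or.inl (le_antisymm h hx.1)
      · exact Or.inr (le_antisymm hx.2 h)
    · simp [Real.zero_rpow (by linarith : q + 1 ≠ 0)]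
    · simp

theorem tsum_ofReal_sub_rpow {ι : Type*} {x : ι → ℝ} (hx : ∀ j, x j ∈ Icc 0 1)
    (hsum : ∑' j, x j = 1) {p : ℝ} (hp : 1 ≤ p) :
    ∑' j, ENNReal.ofReal (x j - x j ^ p) = ENNReal.ofReal (1 - ∑' j, x j ^ p) := by
  have hle : ∀ j, x j ^ p ≤ x j := fun j => Real.rpow_le_self_of_le_one (hx j).1 (hx j).2 hp
  have hx_summable : Summable x := by
    by_contra h
    rw [tsum_eq_zero_of_not_summable h] at hsum
    exact zero_ne_one hsum
  have hxp_summable : Summable fun j => x j ^ p :=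
    hx_summable.of_nonneg_of_le (fun j => Real.rpow_nonneg (hx j).1 _) hle
  rw [← ENNReal.ofReal_tsum_of_nonneg (fun j => sub_nonneg.2 (hle j))
    (hx_summable.sub hxp_summable), hx_summable.tsum_sub hxp_summable, hsum]

theorem stmt1_general (ν : Measure FragSeq)
    (hsum : ∀ᵐ u ∂ν, ∑' j, u.1 j = 1)
    (L : Measure ℝ)
    (hL : ∀ A : Set ℝ, MeasurableSet A →
      L A = ∫⁻ u, ∑' j, (if 0 < u.1 j ∧ u.1 j < 1 ∧ -Real.log (u.1 j) ∈ A
        then ENNReal.ofReal (u.1 j) else 0) ∂ν) :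
    ∀ q : ℝ, 0 ≤ q →
      ∫⁻ x in Set.Ioi (0:ℝ), ENNReal.ofReal (1 - Real.exp (-q * x)) ∂L
        = ∫⁻ u, ENNReal.ofReal (1 - ∑' j, u.1 j ^ (q + 1)) ∂ν := by
  intro q hq
  have hcoord : ∀ j, Measurable fun u : FragSeq => u.1 j :=
    fun j => (measurable_pi_apply j).comp measurable_subtype_coe
  have hL' : ∀ A, MeasurableSet A → L A = ∫⁻ u, ∑' j,
      ((fun u : FragSeq => -Real.log (u.1 j)) ⁻¹' A).indicator
        (fun u => (Ioo 0 1).indicator ENNReal.ofReal (u.1 j)) u ∂ν := by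
    intro A hA
    rw [hL A hA]
    refine lintegral_congr fun u => tsum_congr fun j => ?_
    simp only [indicator, mem_preimage, mem_Ioo]
    split_ifs <;> tauto
  rw [← lintegral_indicator measurableSet_Ioi,
    lintegral_eq_lintegral_tsum_of_apply_eq
      (fun j => (measurable_ofReal.indicator measurableSet_Ioo).comp (hcoord j))
      (fun j => (hcoord j).log.neg) hL'
      ((Measurable.ennreal_ofReal (by fun_prop)).indicator measurableSet_Ioi)]
  refine lintegral_congr_ae ?_
  filter_upwards [hsum] with u hu
  rw [← tsum_ofReal_sub_rpow u.2.1 hu (by linarith)]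
  exact tsum_congr fun j => (ofReal_sub_rpow_add_one_eq_indicator_mul (u.2.1 j) hq).symm

theorem stmt1 (ν : Measure FragSeq) [SigmaFinite ν]
    (hsum : ∀ᵐ u ∂ν, ∑' j, u.1 j = 1)
    (hint : ∫⁻ u, ENNReal.ofReal (1 - u.1 0) ∂ν < ⊤)
    (L : Measure ℝ)
    (hL : ∀ A : Set ℝ, MeasurableSet A →
      L A = ∫⁻ u, ∑' j, (if 0 < u.1 j ∧ u.1 j < 1 ∧ -Real.log (u.1 j) ∈ A
        then ENNReal.ofReal (u.1 j) else 0) ∂ν) :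
    ∀ q : ℝ, 0 ≤ q →
      ∫⁻ x in Set.Ioi (0:ℝ), ENNReal.ofReal (1 - Real.exp (-q * x)) ∂L
        = ∫⁻ u, ENNReal.ofReal (1 - ∑' j, u.1 j ^ (q + 1)) ∂ν :=
  stmt1_general ν hsum L hL
end

section
/- Let κ : (0,∞) → ℝ be concave and differentiable. Suppose p* > 1 satisfies κ(p*−1)/p* ≥ κ(p−1)/p for all p > 1 (p* maximizes p ↦ κ(p−1)/p on (1,∞)), and set v_min := κ(p*−1)/p*. Let Υ > 0, let v := κ′(Υ), and assume v ≥ v_min. Then for every real ρ with ρ ≥ v_min one has (Υ+1)v − κ(Υ) ≥ v − ρ. -/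
/-! Testing the maximality of `pstar` at `p = Υ + 1` gives
`κ Υ ≤ (Υ + 1) v_min = Υ v_min + v_min ≤ Υ v + ρ`. -/

lemma le_add_one_mul_of_forall_div_le {κ : ℝ → ℝ} {m Υ : ℝ} (hΥ : 0 < Υ)
    (hmax : ∀ p : ℝ, 1 < p → κ (p - 1) / p ≤ m) : κ Υ ≤ (Υ + 1) * m := by
  have h := hmax (Υ + 1) (by linarith)
  rwa [add_sub_cancel_right, div_le_iff₀ (by linarith), mul_comm] at h

theorem stmt8_general (κ : ℝ → ℝ)
    (pstar : ℝ)
    (hmax : ∀ p : ℝ, 1 < p → κ (p - 1) / p ≤ κ (pstar - 1) / pstar)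
    (Υ : ℝ) (hΥ : 0 < Υ)
    (v : ℝ)
    (hvmin : κ (pstar - 1) / pstar ≤ v) :
    ∀ ρ : ℝ, κ (pstar - 1) / pstar ≤ ρ →
      v - ρ ≤ (Υ + 1) * v - κ Υ := by
  intro ρ hρ
  have hκ := le_add_one_mul_of_forall_div_le hΥ hmax
  have hΥv := mul_le_mul_of_nonneg_left hvmin hΥ.le
  linarith

theorem stmt8 (κ : ℝ → ℝ)
    (hconc : ConcaveOn ℝ (Set.Ioi (0:ℝ)) κ)
    (hdiff : ∀ p ∈ Set.Ioi (0:ℝ), DifferentiableAt ℝ κ p)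
    (pstar : ℝ) (hpstar : 1 < pstar)
    (hmax : ∀ p : ℝ, 1 < p → κ (p - 1) / p ≤ κ (pstar - 1) / pstar)
    (Υ : ℝ) (hΥ : 0 < Υ)
    (v : ℝ) (hv : v = deriv κ Υ)
    (hvmin : κ (pstar - 1) / pstar ≤ v) :
    ∀ ρ : ℝ, κ (pstar - 1) / pstar ≤ ρ →
      v - ρ ≤ (Υ + 1) * v - κ Υ :=
  stmt8_general κ pstar hmax Υ hΥ v hvmin
end

section
/- Let α ∈ (0,1] and C > 0. Let f : ℝ → ℝ be nondecreasing and Hölder continuous of exponent α with constant C (|f(x) − f(y)| ≤ C|x−y|^α for all x, y). Let S ⊆ [0,1] and suppose that f grows only on S, i.e. f(x) = f(y) whenever 0 ≤ x ≤ y ≤ 1 and the open interval (x,y) is disjoint from S. If f(1) > f(0), then the Hausdorff dimension of the closure of S is at least α. -/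
/-!
For every level `t` between `f 0` and `f 1`, the largest point of `[0, 1]` where `f` takes the
value `t` lies in `closure S ∪ {1}`: if it had a neighbourhood free of `S`, then `f` would be
constant just to its right. Hence `f (closure S ∪ {1})` contains an interval, of dimension `1`,
while an `α`-Hölder map multiplies Hausdorff dimension by at most `1 / α`.
-/

open Set
open scoped NNReal ENNReal

theorem HolderWith.of_dist_le {X Y : Type*} [PseudoMetricSpace X] [PseudoMetricSpace Y]
    {C r : ℝ≥0} {f : X → Y} (h : ∀ x y, dist (f x) (f y) ≤ C * dist x y ^ (r : ℝ)) :
    HolderWith C r f := fun x y => by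
  rw [edist_nndist, edist_nndist, ← ENNReal.coe_rpow_of_nonneg _ r.coe_nonneg, ← ENNReal.coe_mul,
    ENNReal.coe_le_coe, ← NNReal.coe_le_coe]
  simpa using h x y

theorem HolderWith.coe_le_dimH_of_Icc_subset_image {X : Type*} [EMetricSpace X] {C r : ℝ≥0}
    {f : X → ℝ} (hf : HolderWith C r f) (hr : 0 < r) {s : Set X} {a b : ℝ} (hab : a < b)
    (hsub : Icc a b ⊆ f '' s) : (r : ℝ≥0∞) ≤ dimH s := by
  have hIcc : dimH (Icc a b) = 1 := by
    rw [Real.dimH_of_mem_nhds (Icc_mem_nhds (left_lt_add_div_two.2 hab)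
      (add_div_two_lt_right.2 hab))]
    simp
  have h : 1 ≤ dimH s / r := hIcc ▸ (dimH_mono hsub).trans (hf.dimH_image_le hr s)
  rwa [ENNReal.le_div_iff_mul_le (Or.inl (by exact_mod_cast hr.ne')) (Or.inl ENNReal.coe_ne_top),
    one_mul] at h

theorem Icc_subset_image_insert_closure {f : ℝ → ℝ} (hf : Continuous f) {S : Set ℝ} {a b : ℝ}
    (hab : a ≤ b)
    (hconst : ∀ x y, a ≤ x → x ≤ y → y ≤ b → Ioo x y ∩ S = ∅ → f x = f y) :
    Icc (f a) (f b) ⊆ f '' insert b (closure S) := by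
  intro t ht
  rcases ht.2.eq_or_lt with htb | htb
  · exact ⟨b, mem_insert b _, htb.symm⟩
  obtain ⟨c, hac, hct⟩ := intermediate_value_Icc hab hf.continuousOn ⟨ht.1, htb.le⟩
  have hlevel : IsCompact (Icc a b ∩ f ⁻¹' {t}) :=
    isCompact_Icc.inter_right (isClosed_singleton.preimage hf)
  obtain ⟨x, ⟨hxab, hxt⟩, hxmax⟩ := hlevel.exists_isGreatest ⟨c, hac, hct⟩
  refine ⟨x, mem_insert_of_mem b ?_, hxt⟩
  by_contra hxS
  have hxb : x < b := hxab.2.lt_of_ne (by rintro rfl; exact htb.ne' hxt)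
  obtain ⟨u, hxu, hu⟩ := exists_Ico_subset_of_mem_nhds
    (isClosed_closure.isOpen_compl.mem_nhds hxS) ⟨b, hxb⟩
  set y := min u b
  have hxy : x < y := lt_min hxu hxb
  have hgap : Ioo x y ∩ S = ∅ := eq_empty_of_forall_notMem fun z ⟨hz, hzS⟩ =>
    hu ⟨hz.1.le, hz.2.trans_le (min_le_left u b)⟩ (subset_closure hzS)
  have hfy : f y = t := (hconst x y hxab.1 hxy.le (min_le_right u b) hgap).symm.trans hxt
  exact hxy.not_ge (hxmax ⟨⟨hxab.1.trans hxy.le, min_le_right u b⟩, hfy⟩)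

theorem stmt9_general (α C : ℝ) (hα : α ∈ Set.Ioc (0:ℝ) 1)
    (f : ℝ → ℝ)
    (hHolder : ∀ x y : ℝ, |f x - f y| ≤ C * |x - y| ^ α)
    (S : Set ℝ)
    (hgrow : ∀ x y : ℝ, 0 ≤ x → x ≤ y → y ≤ 1 →
      Set.Ioo x y ∩ S = ∅ → f x = f y)
    (hne : f 0 < f 1) :
    ENNReal.ofReal α ≤ dimH (closure S) := by
  have hα0 : 0 < α.toNNReal := Real.toNNReal_pos.2 hα.1
  have hf : HolderWith C.toNNReal α.toNNReal f := .of_dist_le fun x y => by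
    rw [Real.coe_toNNReal α hα.1.le]
    exact (hHolder x y).trans (mul_le_mul_of_nonneg_right (Real.le_coe_toNNReal C)
      (Real.rpow_nonneg (abs_nonneg _) α))
  have hcover := Icc_subset_image_insert_closure (hf.continuous hα0) zero_le_one hgrow
  have hdim := hf.coe_le_dimH_of_Icc_subset_image hα0 hne hcover
  rwa [insert_eq, dimH_union, dimH_singleton, zero_max] at hdim

theorem stmt9 (α C : ℝ) (hα : α ∈ Set.Ioc (0:ℝ) 1) (hC : 0 < C)
    (f : ℝ → ℝ) (hmono : Monotone f)
    (hHolder : ∀ x y : ℝ, |f x - f y| ≤ C * |x - y| ^ α)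
    (S : Set ℝ) (hS : S ⊆ Set.Icc (0:ℝ) 1)
    (hgrow : ∀ x y : ℝ, 0 ≤ x → x ≤ y → y ≤ 1 →
      Set.Ioo x y ∩ S = ∅ → f x = f y)
    (hne : f 0 < f 1) :
    ENNReal.ofReal α ≤ dimH (closure S) :=
  stmt9_general α C hα f hHolder S hgrow hne
end
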